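/- arXiv:1102.3742 — 2 statements merged into one kernel-verified Lean document; each statement's English description precedes it below -/
import Mathlib

section
/- Kronecker's theorem: if p ∈ ℤ[t] is monic with p(0) ≠ 0 and m(p) = 1, then every root of p is a root of unity. -/
open Polynomial

/-- The Mahler measure of a one-variable complex polynomial. -/
noncomputable def mahlerMeasure (p : Polynomial ℂ) : ℝ :=
  Real.exp ((1 / (2 * Real.pi)) *
    ∫ θ in (0 : ℝ)..(2 * Real.pi),
      Real.log ‖p.eval (Complex.exp (θ * Complex.I))‖)

/- At `p = 0` the two disagree: the integrand is `log 0 = 0`, so `_root_.mahlerMeasure 0 = 1`,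
whereas Mathlib sets `mahlerMeasure 0 = 0`. -/
theorem mahlerMeasure_eq_polynomial_mahlerMeasure {p : ℂ[X]} (hp : p ≠ 0) :
    _root_.mahlerMeasure p = p.mahlerMeasure := by
  simp [_root_.mahlerMeasure, Polynomial.mahlerMeasure_def_of_ne_zero hp, circleMap]

theorem kronecker_general (p : Polynomial ℤ) (h0 : p.eval 0 ≠ 0)
    (hm : _root_.mahlerMeasure (p.map (Int.castRingHom ℂ)) = 1) :
    ∀ z : ℂ, (p.map (Int.castRingHom ℂ)).IsRoot z → ∃ n : ℕ, 0 < n ∧ z ^ n = 1 := by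
  have hp : p.map (Int.castRingHom ℂ) ≠ 0 :=
    (Polynomial.map_ne_zero_iff (Int.castRingHom ℂ).injective_int).mpr (by rintro rfl; simp at h0)
  rw [mahlerMeasure_eq_polynomial_mahlerMeasure hp] at hm
  intro z hz
  refine pow_eq_one_of_mahlerMeasure_eq_one hm ?_ ((mem_roots hp).mpr hz)
  rintro rfl
  exact h0 (by simpa [← coeff_zero_eq_eval_zero] using hz)

/-- Kronecker's theorem: if `p ∈ ℤ[t]` is monic with `p(0) ≠ 0` and `m(p) = 1`, then every
complex root of `p` is a root of unity. -/
theorem kronecker (p : Polynomial ℤ) (hmonic : p.Monic) (h0 : p.eval 0 ≠ 0)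
    (hm : _root_.mahlerMeasure (p.map (Int.castRingHom ℂ)) = 1) :
    ∀ z : ℂ, (p.map (Int.castRingHom ℂ)).IsRoot z → ∃ n : ℕ, 0 < n ∧ z ^ n = 1 :=
  kronecker_general p h0 hm
end

section
/- Let p ∈ ℂ[t] be a nonzero polynomial with no roots on the unit circle. Then lim_{n→∞} (1/n)·ln|∏_{ζ^n = 1} p(ζ)| = ln m(p), i.e. (1/n)·ln|Res(p(t), t^n - 1)| converges to the logarithmic Mahler measure of p. -/
/-!
Since `p` has no zeros on the unit circle, `θ ↦ log ‖p (exp (θ i))‖` is continuous on `ℝ`, and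
`(1/n) log ‖∏_k p (exp (2πik/n))‖ = (1/n) ∑_k log ‖p (exp (2πik/n))‖` is `1/(2π)` times its left
Riemann sum on `[0, 2π]` with `n` equal steps. Riemann sums of a continuous function converge to its
integral, and `1/(2π)` times that integral is `log m(p)`.
-/

open Filter Set MeasureTheory intervalIntegral

section RiemannSum

variable {E : Type*} [NormedAddCommGroup E] [NormedSpace ℝ E] [CompleteSpace E]

noncomputable def leftRiemannSum (f : ℝ → E) (a b : ℝ) (n : ℕ) : E :=
  ((b - a) / n) • ∑ k ∈ Finset.range n, f (a + k * ((b - a) / n))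

theorem add_mul_sub_mem_uIcc {a b t : ℝ} (ht : t ∈ Icc (0 : ℝ) 1) :
    a + t * (b - a) ∈ uIcc a b := by
  rcases le_total a b with hab | hba
  · rw [uIcc_of_le hab]
    constructor <;> nlinarith [ht.1, ht.2]
  · rw [uIcc_of_ge hba]
    constructor <;> nlinarith [ht.1, ht.2]

theorem norm_integral_sub_smul_le {f : ℝ → E} {c d ε : ℝ} (hf : IntervalIntegrable f volume c d)
    (hε : ∀ x ∈ uIoc c d, ‖f x - f c‖ ≤ ε) :
    ‖(∫ x in c..d, f x) - (d - c) • f c‖ ≤ ε * |d - c| := by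
  rw [← intervalIntegral.integral_const, ← integral_sub hf intervalIntegrable_const]
  exact norm_integral_le_of_norm_le_const hε

theorem norm_leftRiemannSum_sub_integral_le {f : ℝ → E} {a b ε : ℝ} {n : ℕ} (hn : n ≠ 0)
    (hf : ContinuousOn f (uIcc a b))
    (hosc : ∀ x ∈ uIcc a b, ∀ y ∈ uIcc a b, |x - y| ≤ |b - a| / n → ‖f x - f y‖ ≤ ε) :
    ‖leftRiemannSum f a b n - ∫ x in a..b, f x‖ ≤ ε * |b - a| := by
  set h := (b - a) / n with h_def
  set x : ℕ → ℝ := fun k => a + k * h with hx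
  have hx_zero : x 0 = a := by simp [hx]
  have hx_n : x n = b := by
    simp only [hx, h_def]
    field_simp
    ring
  have hx_mem : ∀ k ≤ n, x k ∈ uIcc a b := fun k hk => by
    have hkh : (k : ℝ) * h = (k / n) * (b - a) := by
      rw [h_def]
      field_simp
    show a + k * h ∈ uIcc a b
    rw [hkh]
    exact add_mul_sub_mem_uIcc
      ⟨by positivity, div_le_one_of_le₀ (by exact_mod_cast hk) n.cast_nonneg⟩
  have hstep : ∀ k, x (k + 1) - x k = h := fun k => by
    simp only [hx]
    push_cast
    ring
  have hsub : ∀ k < n, uIcc (x k) (x (k + 1)) ⊆ uIcc a b := fun k hk =>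
    uIcc_subset_uIcc (hx_mem k hk.le) (hx_mem _ hk)
  have hpiece : ∀ k < n, ‖(∫ t in x k..x (k + 1), f t) - h • f (x k)‖ ≤ ε * |h| := by
    intro k hk
    rw [← hstep k]
    refine norm_integral_sub_smul_le ((hf.mono (hsub k hk)).intervalIntegrable) fun t ht => ?_
    have ht' := uIoc_subset_uIcc ht
    refine hosc t (hsub k hk ht') _ (hx_mem k hk.le) ?_
    calc |t - x k| ≤ |x (k + 1) - x k| := abs_sub_left_of_mem_uIcc ht'
      _ = |b - a| / n := by rw [hstep, h_def, abs_div, Nat.abs_cast]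
  have hsum : ∫ t in a..b, f t = ∑ k ∈ Finset.range n, ∫ t in x k..x (k + 1), f t := by
    rw [sum_integral_adjacent_intervals fun k hk => (hf.mono (hsub k hk)).intervalIntegrable,
      hx_zero, hx_n]
  rw [leftRiemannSum, hsum, Finset.smul_sum, ← Finset.sum_sub_distrib, ← norm_neg,
    ← Finset.sum_neg_distrib]
  calc ‖∑ k ∈ Finset.range n, -(h • f (x k) - ∫ t in x k..x (k + 1), f t)‖
      ≤ ∑ k ∈ Finset.range n, ε * |h| := norm_sum_le_of_le _ fun k hk => by
        rw [neg_sub]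
        exact hpiece k (Finset.mem_range.1 hk)
    _ = ε * |b - a| := by
      rw [Finset.sum_const, Finset.card_range, nsmul_eq_mul, h_def, abs_div, Nat.abs_cast]
      field_simp

theorem tendsto_leftRiemannSum_integral {f : ℝ → E} {a b : ℝ} (hf : ContinuousOn f (uIcc a b)) :
    Tendsto (leftRiemannSum f a b) atTop (nhds (∫ x in a..b, f x)) := by
  refine Metric.tendsto_nhds.2 fun ε hε => ?_
  set ε' := ε / (|b - a| + 1) with hε'
  obtain ⟨δ, hδ, hunif⟩ := Metric.uniformContinuousOn_iff_le.1
    (isCompact_uIcc.uniformContinuousOn_of_continuous hf) ε' (by positivity)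
  have hmesh : ∀ᶠ n : ℕ in atTop, |b - a| / n ≤ δ :=
    (tendsto_const_div_atTop_nhds_zero_nat |b - a|).eventually (ge_mem_nhds hδ)
  filter_upwards [hmesh, eventually_ne_atTop 0] with n hn hn0
  rw [dist_eq_norm]
  calc ‖leftRiemannSum f a b n - ∫ x in a..b, f x‖ ≤ ε' * |b - a| :=
        norm_leftRiemannSum_sub_integral_le hn0 hf fun x hx y hy hxy =>
          dist_eq_norm (f x) (f y) ▸ hunif x hx y hy ((Real.dist_eq x y).trans_le (hxy.trans hn))
    _ < ε := by
      rw [hε', div_mul_eq_mul_div, div_lt_iff₀ (by positivity)]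
      nlinarith [abs_nonneg (b - a)]

end RiemannSum

open Polynomial

theorem tendsto_log_prod_rootsOfUnity_general (p : Polynomial ℂ)
    (hcirc : ∀ z : ℂ, ‖z‖ = 1 → p.eval z ≠ 0) :
    Filter.Tendsto
      (fun n : ℕ => (1 / (n : ℝ)) *
        Real.log ‖
          (∏ k ∈ Finset.range n,
            p.eval (Complex.exp (2 * Real.pi * Complex.I * k / n)))‖)
      Filter.atTop (nhds (Real.log (_root_.mahlerMeasure p))) := by
  have hroot (θ : ℝ) : p.eval (Complex.exp (θ * Complex.I)) ≠ 0 :=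
    hcirc _ (Complex.norm_exp_ofReal_mul_I θ)
  set f : ℝ → ℝ := fun θ => Real.log ‖p.eval (Complex.exp (θ * Complex.I))‖
  have hf : Continuous f := Continuous.log (by fun_prop) fun θ => norm_ne_zero_iff.2 (hroot θ)
  rw [_root_.mahlerMeasure, Real.log_exp]
  refine ((tendsto_leftRiemannSum_integral hf.continuousOn).const_mul (1 / (2 * Real.pi))).congr
    fun n => ?_
  have hnode (k : ℕ) : Complex.exp (2 * Real.pi * Complex.I * k / n) =
      Complex.exp (((0 + k * ((2 * Real.pi - 0) / n) : ℝ) : ℂ) * Complex.I) := by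
    push_cast
    ring_nf
  simp only [hnode, norm_prod]
  rw [Real.log_prod fun k _ => norm_ne_zero_iff.2 (hroot _), leftRiemannSum, smul_eq_mul,
    ← mul_assoc, sub_zero]
  congr 1
  field_simp

/-- If `p ∈ ℂ[t]` is nonzero with no roots on the unit circle, then
`(1/n)·ln|∏_{ζⁿ=1} p(ζ)| → ln m(p)` as `n → ∞`. -/
theorem tendsto_log_prod_rootsOfUnity (p : Polynomial ℂ) (hp : p ≠ 0)
    (hcirc : ∀ z : ℂ, ‖z‖ = 1 → p.eval z ≠ 0) :
    Filter.Tendsto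
      (fun n : ℕ => (1 / (n : ℝ)) *
        Real.log ‖
          (∏ k ∈ Finset.range n,
            p.eval (Complex.exp (2 * Real.pi * Complex.I * k / n)))‖)
      Filter.atTop (nhds (Real.log (_root_.mahlerMeasure p))) :=
  tendsto_log_prod_rootsOfUnity_general p hcirc
end
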